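/- Let H = (V,E) be a finite hypergraph in which every hyperedge e ∈ E satisfies |e| ≤ L, and let x ∈ [0,1]^E satisfy Σ_{e ∋ v} x_e ≤ 1 for every vertex v ∈ V. Then there exists a probability distribution μ on the hypergraph matchings of H (sets of pairwise vertex-disjoint hyperedges) such that: (i) P_{S∼μ}[e ∈ S] = x_e/(L+1) for every hyperedge e ∈ E, and (ii) for every e ∈ E and every hypergraph matching T with e ∉ T and P_{S∼μ}[S∖{e} = T] > 0, we have P_{S∼μ}[e ∈ S | S∖{e} = T] ≤ x_e. In particular, there is a 1/(L+1)-selectable stationary online contention resolution scheme for rank-L hypergraph matchings. -/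

import Mathlib

/-!
For `L ≥ 1`, take the Gibbs distribution `μ S ∝ exp (∑ f ∈ S, θ f)` on the matchings that use only
edges with `x f > 0`, with `θ` chosen so that every marginal is `x e / (L + 1)`. Such `θ` exists
because it maximises the dual of the maximum-entropy problem, and a greedy matching argument
makes that dual coercive. Conditionally on `S \ {e} = T`, the edge `e` is then present with
probability `exp (θ e) / (1 + exp (θ e)) ≤ exp (θ e)`. The matchings to which `e` can be added
have mass at least `1 - ∑ x f / (L + 1)` over the edges `f` conflicting with `e`, and that sum is
at most `L` by the degree and rank bounds. Since adding `e` scales weights by `exp (θ e)`, this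
gives `exp (θ e) ≤ x e`. For `L = 0` every edge is empty and the product measure works.
-/

open Finset

/-- `S` is a hypergraph matching: the hyperedges in `S` are pairwise vertex-disjoint. -/
def IsHypMatching {V E : Type*} [DecidableEq V] (ends : E → Finset V) (S : Finset E) : Prop :=
  ∀ e ∈ S, ∀ f ∈ S, e ≠ f → Disjoint (ends e) (ends f)

section Hypergraph

variable {V E : Type*} [DecidableEq V] {ends : E → Finset V}

namespace IsHypMatching

lemma mono {S T : Finset E} (hS : IsHypMatching ends S) (hTS : T ⊆ S) :
    IsHypMatching ends T :=
  fun e he f hf hef => hS e (hTS he) f (hTS hf) hef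

lemma empty : IsHypMatching ends (∅ : Finset E) := by
  simp [IsHypMatching]

lemma singleton (e : E) : IsHypMatching ends {e} := by
  simp [IsHypMatching]

lemma insert [DecidableEq E] {T : Finset E} {e : E} (hT : IsHypMatching ends T)
    (hdisj : ∀ f ∈ T, Disjoint (ends f) (ends e)) : IsHypMatching ends (insert e T) := by
  intro a ha b hb hab
  rw [mem_insert] at ha hb
  rcases ha with rfl | ha
  · rcases hb with rfl | hb
    · exact absurd rfl hab
    · exact (hdisj b hb).symm
  · rcases hb with rfl | hb
    · exact hdisj a ha
    · exact hT a ha b hb hab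

end IsHypMatching

variable [Fintype E] [DecidableEq E]

def conflicts (ends : E → Finset V) (e : E) : Finset E :=
  univ.filter (fun f => f = e ∨ ¬ Disjoint (ends f) (ends e))

lemma self_mem_conflicts (e : E) : e ∈ conflicts ends e := by
  simp [conflicts]

lemma disjoint_of_not_mem_conflicts {e f : E} (hf : f ∉ conflicts ends e) :
    Disjoint (ends f) (ends e) := by
  simp only [conflicts, mem_filter, mem_univ, true_and, not_or, not_not] at hf
  exact hf.2

lemma sum_conflicts_le {x : E → ℝ} (hx : ∀ e, 0 ≤ x e)
    (hdeg : ∀ v, ∑ e ∈ univ.filter (fun e => v ∈ ends e), x e ≤ 1) (e : E) :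
    ∑ f ∈ conflicts ends e, x f ≤ x e + #(ends e) * (1 - x e) := by
  set C := (conflicts ends e).erase e
  have hcover : ∀ f ∈ C, x f ≤ ∑ v ∈ ends e, if v ∈ ends f then x f else 0 := by
    intro f hf
    obtain ⟨hfe, hf⟩ := mem_erase.1 hf
    have hmeet : ¬ Disjoint (ends f) (ends e) := by
      simpa [conflicts, hfe] using hf
    obtain ⟨v, hvf, hve⟩ := not_disjoint_iff.1 hmeet
    calc x f = if v ∈ ends f then x f else 0 := by rw [if_pos hvf]
      _ ≤ _ := single_le_sum (f := fun v => if v ∈ ends f then x f else 0)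
          (fun u _ => by split_ifs <;> simp [hx f]) hve
  have hvertex : ∀ v ∈ ends e, ∑ f ∈ C, (if v ∈ ends f then x f else 0) ≤ 1 - x e := by
    intro v hv
    have hdeg' : ∑ f, (if v ∈ ends f then x f else 0) ≤ 1 := by
      rw [← sum_filter]; exact hdeg v
    rw [← sum_erase_add _ _ (mem_univ e), if_pos hv] at hdeg'
    have hsub : ∑ f ∈ C, (if v ∈ ends f then x f else 0)
        ≤ ∑ f ∈ univ.erase e, (if v ∈ ends f then x f else 0) :=
      sum_le_sum_of_subset_of_nonneg (erase_subset_erase e (subset_univ _))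
        (fun f _ _ => by split_ifs <;> simp [hx f])
    linarith
  calc ∑ f ∈ conflicts ends e, x f = x e + ∑ f ∈ C, x f :=
        (add_sum_erase _ _ (self_mem_conflicts e)).symm
    _ ≤ x e + ∑ f ∈ C, ∑ v ∈ ends e, if v ∈ ends f then x f else 0 := by
        gcongr with f hf; exact hcover f hf
    _ = x e + ∑ v ∈ ends e, ∑ f ∈ C, if v ∈ ends f then x f else 0 := by rw [sum_comm]
    _ ≤ x e + ∑ v ∈ ends e, (1 - x e) := by gcongr with v hv; exact hvertex v hv
    _ = x e + #(ends e) * (1 - x e) := by rw [sum_const, nsmul_eq_mul]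

lemma sum_conflicts_le_rank {L : ℕ} (hL : 1 ≤ L)
    (hrank : ∀ e, #(ends e) ≤ L) {x : E → ℝ} (hx : ∀ e, 0 ≤ x e ∧ x e ≤ 1)
    (hdeg : ∀ v, ∑ e ∈ univ.filter (fun e => v ∈ ends e), x e ≤ 1) (e : E) :
    ∑ f ∈ conflicts ends e, x f ≤ L := by
  have hcard : (#(ends e) : ℝ) ≤ L := by exact_mod_cast hrank e
  have hL1 : (1 : ℝ) ≤ L := by exact_mod_cast hL
  nlinarith [sum_conflicts_le (fun e => (hx e).1) hdeg e, (hx e).1, (hx e).2]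

lemma exists_isHypMatching_subset_sum_mul_le {x : E → ℝ} {K : ℝ} (hx : ∀ e, 0 ≤ x e)
    (hK : ∀ e, ∑ f ∈ conflicts ends e, x f ≤ K) (g : E → ℝ) (F : Finset E)
    (hg : ∀ f ∈ F, 0 ≤ g f) :
    ∃ S ⊆ F, IsHypMatching ends S ∧ ∑ f ∈ F, x f * g f ≤ K * ∑ f ∈ S, g f := by
  induction F using Finset.strongInduction with
  | H F ih =>
  rcases F.eq_empty_or_nonempty with rfl | hF
  · exact ⟨∅, empty_subset _, IsHypMatching.empty, by simp⟩
  -- an edge of maximal weight pays for everything it conflicts with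
  obtain ⟨e, heF, hmax⟩ := exists_max_image F g hF
  set F' := F.filter (· ∉ conflicts ends e)
  obtain ⟨S, hSF', hS, hsum⟩ :=
    ih F' (filter_ssubset.2 ⟨e, heF, not_not.2 (self_mem_conflicts e)⟩)
      (fun f hf => hg f (filter_subset _ _ hf))
  have heS : e ∉ S := fun he => (mem_filter.1 (hSF' he)).2 (self_mem_conflicts e)
  refine ⟨insert e S, insert_subset heF (hSF'.trans (filter_subset _ _)), ?_, ?_⟩
  · exact hS.insert fun f hf => disjoint_of_not_mem_conflicts (mem_filter.1 (hSF' hf)).2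
  have hnear : ∑ f ∈ F.filter (· ∈ conflicts ends e), x f * g f ≤ K * g e :=
    calc ∑ f ∈ F.filter (· ∈ conflicts ends e), x f * g f
        ≤ ∑ f ∈ F.filter (· ∈ conflicts ends e), x f * g e :=
          sum_le_sum fun f hf => mul_le_mul_of_nonneg_left (hmax f (filter_subset _ _ hf)) (hx f)
      _ ≤ ∑ f ∈ conflicts ends e, x f * g e :=
          sum_le_sum_of_subset_of_nonneg (fun f hf => (mem_filter.1 hf).2)
            (fun f _ _ => mul_nonneg (hx f) (hg e heF))
      _ ≤ K * g e := by rw [← sum_mul]; exact mul_le_mul_of_nonneg_right (hK e) (hg e heF)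
  rw [← sum_filter_add_sum_filter_not F (· ∈ conflicts ends e), sum_insert heS]
  linarith

end Hypergraph

section Gibbs

variable {E : Type*}

noncomputable def gibbsWeight (θ : E → ℝ) (S : Finset E) : ℝ := Real.exp (∑ f ∈ S, θ f)

noncomputable def partitionFn (M : Finset (Finset E)) (θ : E → ℝ) : ℝ :=
  ∑ S ∈ M, gibbsWeight θ S

/-- Dual of the maximum-entropy problem on `M` with marginals `p`: at a critical point `θ`,
`gibbs M θ` has marginals `p`. -/
noncomputable def gibbsDual [Fintype E] (M : Finset (Finset E)) (p θ : E → ℝ) : ℝ :=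
  ∑ e, p e * θ e - Real.log (partitionFn M θ)

variable {M : Finset (Finset E)}

lemma gibbsWeight_pos (θ : E → ℝ) (S : Finset E) : 0 < gibbsWeight θ S := Real.exp_pos _

lemma partitionFn_pos (hM : M.Nonempty) (θ : E → ℝ) : 0 < partitionFn M θ :=
  sum_pos (fun S _ => gibbsWeight_pos θ S) hM

lemma partitionFn_zero : partitionFn M 0 = #M := by
  simp [partitionFn, gibbsWeight]

lemma sum_le_log_partitionFn (θ : E → ℝ) {S : Finset E} (hS : S ∈ M) :
    ∑ f ∈ S, θ f ≤ Real.log (partitionFn M θ) := by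
  rw [← Real.log_exp (∑ f ∈ S, θ f)]
  exact Real.log_le_log (gibbsWeight_pos θ S)
    (single_le_sum (fun T _ => (gibbsWeight_pos θ T).le) hS)

lemma sum_posPart_le_log_partitionFn (hM : IsLowerSet (M : Set (Finset E))) (θ : E → ℝ)
    {S : Finset E} (hS : S ∈ M) : ∑ f ∈ S, (θ f)⁺ ≤ Real.log (partitionFn M θ) := by
  classical
  calc ∑ f ∈ S, (θ f)⁺ = ∑ f ∈ S.filter (0 < θ ·), θ f := by
        rw [← sum_filter_of_ne fun f _ hf => posPart_pos_iff.1 ((posPart_nonneg _).lt_of_ne' hf)]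
        exact sum_congr rfl fun f hf => posPart_eq_self.2 (mem_filter.1 hf).2.le
    _ ≤ _ := sum_le_log_partitionFn θ (hM (filter_subset _ _) hS)

lemma gibbsWeight_add_single [DecidableEq E] (θ : E → ℝ) (e : E) (t : ℝ) (S : Finset E) :
    gibbsWeight (θ + Pi.single e t) S = gibbsWeight θ S * Real.exp (if e ∈ S then t else 0) := by
  simp [gibbsWeight, sum_add_distrib, Real.exp_add, sum_pi_single']

section Fintype

variable [Fintype E]

lemma continuous_gibbsDual (hM : M.Nonempty) (p : E → ℝ) : Continuous (gibbsDual M p) := by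
  unfold gibbsDual partitionFn gibbsWeight
  fun_prop (disch := exact fun θ => (partitionFn_pos hM θ).ne')

lemma gibbsDual_zero (p : E → ℝ) : gibbsDual M p 0 = -Real.log #M := by
  simp [gibbsDual, partitionFn_zero]

end Fintype

variable [DecidableEq E]

noncomputable def gibbs (M : Finset (Finset E)) (θ : E → ℝ) (S : Finset E) : ℝ :=
  if S ∈ M then gibbsWeight θ S / partitionFn M θ else 0

def marginal [Fintype E] (μ : Finset E → ℝ) (e : E) : ℝ :=
  ∑ S ∈ univ.filter (fun S => e ∈ S), μ S

lemma gibbs_nonneg (θ : E → ℝ) (S : Finset E) : 0 ≤ gibbs M θ S := by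
  unfold gibbs
  split_ifs
  · exact div_nonneg (gibbsWeight_pos θ S).le (sum_nonneg fun T _ => (gibbsWeight_pos θ T).le)
  · exact le_rfl

lemma mem_of_gibbs_ne_zero {θ : E → ℝ} {S : Finset E} (hS : gibbs M θ S ≠ 0) : S ∈ M := by
  by_contra h
  exact hS (if_neg h)

lemma gibbs_insert (θ : E → ℝ) {e : E} {T : Finset E} (he : e ∉ T)
    (hT : T ∈ M) (heT : insert e T ∈ M) :
    gibbs M θ (insert e T) = Real.exp (θ e) * gibbs M θ T := by
  simp only [gibbs, if_pos hT, if_pos heT, gibbsWeight, sum_insert he, Real.exp_add, mul_div_assoc]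

lemma hasDerivAt_partitionFn_add_single (θ : E → ℝ) (e : E) :
    HasDerivAt (fun t => partitionFn M (θ + Pi.single e t))
      (∑ S ∈ M.filter (e ∈ ·), gibbsWeight θ S) 0 := by
  simp only [partitionFn, gibbsWeight_add_single, sum_filter]
  refine HasDerivAt.fun_sum fun S _ => ?_
  by_cases heS : e ∈ S
  · simpa [heS] using (Real.hasDerivAt_exp 0).const_mul (gibbsWeight θ S)
  · simpa [heS] using hasDerivAt_const (0 : ℝ) (gibbsWeight θ S)

lemma gibbs_insert_div_le (hM : IsLowerSet (M : Set (Finset E))) (θ : E → ℝ) {e : E} {T : Finset E}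
    (he : e ∉ T) {c : ℝ} (hc : 0 ≤ c) (hexp : insert e T ∈ M → Real.exp (θ e) ≤ c) :
    gibbs M θ (insert e T) / (gibbs M θ T + gibbs M θ (insert e T)) ≤ c := by
  by_cases heT : insert e T ∈ M
  · have hT : T ∈ M := hM (subset_insert e T) heT
    have hpos : 0 < gibbs M θ T := by
      rw [gibbs, if_pos hT]
      exact div_pos (gibbsWeight_pos θ T) (partitionFn_pos ⟨T, hT⟩ θ)
    have hy : 0 < Real.exp (θ e) := Real.exp_pos _
    rw [gibbs_insert θ he hT heT]
    calc Real.exp (θ e) * gibbs M θ T / (gibbs M θ T + Real.exp (θ e) * gibbs M θ T)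
        = Real.exp (θ e) / (1 + Real.exp (θ e)) := by field_simp
      _ ≤ Real.exp (θ e) := div_le_self hy.le (by linarith)
      _ ≤ c := hexp heT
  · rw [gibbs, if_neg heT, zero_div]
    exact hc

variable [Fintype E]

lemma sum_filter_not_disjoint_le {μ : Finset E → ℝ} (hμ : ∀ S, 0 ≤ μ S) (N : Finset E) :
    ∑ S ∈ univ.filter (fun S => ¬ Disjoint S N), μ S ≤ ∑ f ∈ N, marginal μ f := by
  simp only [marginal, sum_filter]
  rw [sum_comm]
  refine sum_le_sum fun S _ => ?_
  split_ifs with h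
  · exact sum_nonneg fun f _ => by split_ifs <;> simp [hμ S]
  · obtain ⟨f, hfS, hfN⟩ := not_disjoint_iff.1 h
    calc μ S = if f ∈ S then μ S else 0 := (if_pos hfS).symm
      _ ≤ _ := single_le_sum (f := fun f => if f ∈ S then μ S else 0)
          (fun g _ => by split_ifs <;> simp [hμ S]) hfN

lemma sum_filter_gibbs (θ : E → ℝ) (P : Finset E → Prop) [DecidablePred P] :
    ∑ S ∈ univ.filter P, gibbs M θ S = (∑ S ∈ M.filter P, gibbsWeight θ S) / partitionFn M θ := by
  simp only [gibbs, sum_div]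
  rw [sum_ite_mem]
  congr 1
  ext S
  simp [and_comm]

lemma sum_gibbs (hM : M.Nonempty) (θ : E → ℝ) : ∑ S, gibbs M θ S = 1 := by
  have h := sum_filter_gibbs (M := M) θ (fun _ => True)
  rwa [filter_true, filter_true, ← partitionFn, div_self (partitionFn_pos hM θ).ne'] at h

lemma marginal_gibbs (θ : E → ℝ) (e : E) :
    marginal (gibbs M θ) e = (∑ S ∈ M.filter (e ∈ ·), gibbsWeight θ S) / partitionFn M θ :=
  sum_filter_gibbs θ _

lemma hasDerivAt_gibbsDual_add_single (hM : M.Nonempty) (p θ : E → ℝ) (e : E) :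
    HasDerivAt (fun t => gibbsDual M p (θ + Pi.single e t))
      (p e - marginal (gibbs M θ) e) 0 := by
  have hlin : ∀ t, ∑ f, p f * (θ + Pi.single e t : E → ℝ) f = ∑ f, p f * θ f + p e * t := by
    intro t
    simp [mul_add, sum_add_distrib, Pi.single_apply]
  have hlog := (hasDerivAt_partitionFn_add_single (M := M) θ e).log
    (by simpa using (partitionFn_pos hM θ).ne')
  simp only [Pi.single_zero, add_zero] at hlog
  rw [marginal_gibbs]
  simp only [gibbsDual, hlin]
  simpa using (((hasDerivAt_id (0 : ℝ)).const_mul (p e)).const_add (∑ f, p f * θ f)).fun_sub hlog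

theorem exists_marginal_gibbs_eq (hM : M.Nonempty) {p : E → ℝ} (hp : ∀ e, 0 ≤ p e)
    (hsupp : ∀ S ∈ M, ∀ e ∈ S, 0 < p e)
    (hcoer : ∀ θ e, 0 < p e → gibbsDual M p θ ≤ -(p e * |θ e|)) :
    ∃ θ, ∀ e, marginal (gibbs M θ) e = p e := by
  -- Maximise the dual over a box; on its faces `hcoer` gives `gibbsDual ≤ -C < gibbsDual 0`, so
  -- the maximiser is interior. Coordinates with `p f = 0` get radius `C / 0 = 0`.
  set C := Real.log #M + 1
  have hC : 0 < C := by linarith [Real.log_natCast_nonneg #M]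
  set R : E → ℝ := fun f => C / p f
  set box := Set.univ.pi fun f => Set.Icc (-R f) (R f)
  have hzero : (0 : E → ℝ) ∈ box := Set.mem_univ_pi.2 fun f =>
    ⟨by simpa using div_nonneg hC.le (hp f), div_nonneg hC.le (hp f)⟩
  obtain ⟨θ, hθ, hmax⟩ := (isCompact_univ_pi fun f => isCompact_Icc).exists_isMaxOn ⟨0, hzero⟩
    (continuous_gibbsDual hM p).continuousOn
  refine ⟨θ, fun e => ?_⟩
  rcases (hp e).eq_or_lt with he | he
  · rw [marginal_gibbs, ← he, filter_false_of_mem fun S hS heS => (hsupp S hS e heS).ne he,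
      sum_empty, zero_div]
  have hinterior : |θ e| < R e := by
    have h0 : gibbsDual M p 0 ≤ gibbsDual M p θ := hmax hzero
    have h1 := hcoer θ e he
    rw [gibbsDual_zero] at h0
    rw [lt_div_iff₀' he]
    linarith
  have hlocal : IsLocalMax (fun t => gibbsDual M p (θ + Pi.single e t)) 0 := by
    refine Filter.eventually_of_mem (Metric.ball_mem_nhds 0 (sub_pos.2 hinterior)) fun t ht => ?_
    rw [mem_ball_zero_iff, Real.norm_eq_abs] at ht
    simp only [Pi.single_zero, add_zero]
    refine hmax (Set.mem_univ_pi.2 fun f => ?_)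
    rcases eq_or_ne f e with rfl | hfe
    · have : |θ f + t| < R f := (abs_add_le (θ f) t).trans_lt (by linarith)
      simpa [abs_le] using this.le
    · simpa [hfe] using Set.mem_univ_pi.1 hθ f
  linarith [hlocal.hasDerivAt_eq_zero (hasDerivAt_gibbsDual_add_single hM p θ e)]

end Gibbs

section SupportMatchings

variable {V E : Type*} [DecidableEq V] [Fintype E] [DecidableEq E] {ends : E → Finset V}
  {x : E → ℝ}

noncomputable def supportMatchings (ends : E → Finset V) (x : E → ℝ) : Finset (Finset E) :=
  open Classical in univ.filter fun S => IsHypMatching ends S ∧ ∀ f ∈ S, 0 < x f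

lemma mem_supportMatchings {S : Finset E} :
    S ∈ supportMatchings ends x ↔ IsHypMatching ends S ∧ ∀ f ∈ S, 0 < x f := by
  simp [supportMatchings]

lemma isLowerSet_supportMatchings : IsLowerSet (supportMatchings ends x : Set (Finset E)) := by
  intro S T hTS hS
  rw [mem_coe, mem_supportMatchings] at hS ⊢
  exact ⟨hS.1.mono hTS, fun f hf => hS.2 f (hTS hf)⟩

lemma empty_mem_supportMatchings : ∅ ∈ supportMatchings ends x :=
  mem_supportMatchings.2 ⟨IsHypMatching.empty, by simp⟩

lemma singleton_mem_supportMatchings {e : E} (he : 0 < x e) :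
    {e} ∈ supportMatchings ends x :=
  mem_supportMatchings.2 ⟨IsHypMatching.singleton e, by simpa using he⟩

lemma insert_mem_supportMatchings {T : Finset E} (hT : T ∈ supportMatchings ends x) {e : E}
    (he : 0 < x e) (hTe : Disjoint T (conflicts ends e)) :
    insert e T ∈ supportMatchings ends x := by
  obtain ⟨hT, hpos⟩ := mem_supportMatchings.1 hT
  refine mem_supportMatchings.2 ⟨hT.insert fun f hf =>
    disjoint_of_not_mem_conflicts (disjoint_left.1 hTe hf), ?_⟩
  simpa [he] using hpos

/-- The greedy bound controls the positive part of `θ` by `log Z`. -/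
lemma gibbsDual_supportMatchings_le {K : ℝ} (hK0 : 0 ≤ K) (hx : ∀ e, 0 ≤ x e ∧ x e ≤ 1)
    (hK : ∀ e, ∑ f ∈ conflicts ends e, x f ≤ K) (θ : E → ℝ) {e : E} (he : 0 < x e) :
    gibbsDual (supportMatchings ends x) (fun f => x f / (K + 1)) θ
      ≤ -(x e / (K + 1) * |θ e|) := by
  set M := supportMatchings ends x
  set ℓ := Real.log (partitionFn M θ)
  have hM : IsLowerSet (M : Set (Finset E)) := isLowerSet_supportMatchings
  have hpos : ∑ f, x f * (θ f)⁺ ≤ K * ℓ := by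
    obtain ⟨S, hSF, hS, hsum⟩ := exists_isHypMatching_subset_sum_mul_le (fun e => (hx e).1) hK
      (fun f => (θ f)⁺) (univ.filter (0 < x ·)) (fun f _ => posPart_nonneg _)
    have hSM : S ∈ M := mem_supportMatchings.2 ⟨hS, fun f hf => (mem_filter.1 (hSF hf)).2⟩
    rw [← sum_filter_of_ne fun f _ hf => (hx f).1.lt_of_ne' (left_ne_zero_of_mul hf)]
    exact hsum.trans (mul_le_mul_of_nonneg_left (sum_posPart_le_log_partitionFn hM θ hSM) hK0)
  have hneg : x e * (θ e)⁻ ≤ ∑ f, x f * (θ f)⁻ :=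
    single_le_sum (fun f _ => mul_nonneg (hx f).1 (negPart_nonneg _)) (mem_univ e)
  have hℓe : (θ e)⁺ ≤ ℓ := by
    simpa using sum_posPart_le_log_partitionFn hM θ (singleton_mem_supportMatchings he)
  have hsplit : ∑ f, x f * θ f = ∑ f, x f * (θ f)⁺ - ∑ f, x f * (θ f)⁻ := by
    simp only [← sum_sub_distrib, ← mul_sub, posPart_sub_negPart]
  have hbound : ∑ f, x f * θ f - (K + 1) * ℓ ≤ -(x e * |θ e|) := by
    rw [← posPart_add_negPart (θ e)]
    nlinarith [(hx e).2, posPart_nonneg (θ e)]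
  calc gibbsDual M (fun f => x f / (K + 1)) θ = (∑ f, x f * θ f - (K + 1) * ℓ) / (K + 1) := by
        simp only [gibbsDual, div_mul_eq_mul_div, ← sum_div]
        field_simp
        rfl
    _ ≤ -(x e * |θ e|) / (K + 1) := by gcongr
    _ = -(x e / (K + 1) * |θ e|) := by ring

lemma sum_gibbsWeight_filter_mem_eq_exp_mul (θ : E → ℝ) {e : E} (he : 0 < x e) :
    ∑ S ∈ (supportMatchings ends x).filter (e ∈ ·), gibbsWeight θ S
      = Real.exp (θ e) * ∑ T ∈ (supportMatchings ends x).filter (Disjoint · (conflicts ends e)),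
          gibbsWeight θ T := by
  rw [mul_sum]
  refine sum_nbij' (fun S => S.erase e) (fun T => insert e T) ?_ ?_ ?_ ?_ ?_
  · intro S hS
    obtain ⟨hSM, heS⟩ := mem_filter.1 hS
    refine mem_filter.2 ⟨isLowerSet_supportMatchings (erase_subset e S) hSM, ?_⟩
    refine disjoint_left.2 fun f hf hfC => ?_
    obtain ⟨hfe, hfS⟩ := mem_erase.1 hf
    simp only [conflicts, mem_filter, mem_univ, true_and] at hfC
    exact hfC.elim hfe fun h => h ((mem_supportMatchings.1 hSM).1 f hfS e heS hfe)
  · intro T hT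
    obtain ⟨hTM, hTC⟩ := mem_filter.1 hT
    exact mem_filter.2 ⟨insert_mem_supportMatchings hTM he hTC, mem_insert_self e T⟩
  · intro S hS
    exact insert_erase (mem_filter.1 hS).2
  · intro T hT
    exact erase_insert fun he => disjoint_left.1 (mem_filter.1 hT).2 he (self_mem_conflicts e)
  · intro S hS
    rw [gibbsWeight, gibbsWeight, ← add_sum_erase _ _ (mem_filter.1 hS).2, Real.exp_add]

/-- The matchings to which `e` can be added carry mass at least `1 / (K + 1)`, and adding `e`
multiplies their weights by `exp (θ e)`. -/
lemma exp_le_of_marginal_gibbs_eq {K : ℝ} (hK0 : 0 ≤ K)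
    (hK : ∀ e, ∑ f ∈ conflicts ends e, x f ≤ K) {θ : E → ℝ}
    (hθ : ∀ f, marginal (gibbs (supportMatchings ends x) θ) f = x f / (K + 1))
    {e : E} (he : 0 < x e) : Real.exp (θ e) ≤ x e := by
  set M := supportMatchings ends x
  set μ := gibbs M θ
  have hM : M.Nonempty := ⟨∅, empty_mem_supportMatchings⟩
  set A := ∑ T ∈ univ.filter (Disjoint · (conflicts ends e)), μ T
  have hmarg : marginal μ e = Real.exp (θ e) * A := by
    rw [marginal_gibbs, sum_gibbsWeight_filter_mem_eq_exp_mul θ he, mul_div_assoc,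
      ← sum_filter_gibbs]
  have hA : 1 / (K + 1) ≤ A := by
    have hunion := sum_filter_not_disjoint_le (gibbs_nonneg (M := M) θ) (conflicts ends e)
    have htotal : A + ∑ T ∈ univ.filter (fun T => ¬ Disjoint T (conflicts ends e)), μ T = 1 := by
      rw [sum_filter_add_sum_filter_not, sum_gibbs hM]
    have hconf : ∑ f ∈ conflicts ends e, marginal μ f ≤ K / (K + 1) := by
      simp only [hθ, ← sum_div]
      exact div_le_div_of_nonneg_right (hK e) (by positivity)
    have : K / (K + 1) = 1 - 1 / (K + 1) := by field_simp; ring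
    linarith
  have h := hθ e
  rw [hmarg] at h
  have hK1 : (0 : ℝ) < K + 1 := by positivity
  calc Real.exp (θ e) = Real.exp (θ e) * (1 / (K + 1)) * (K + 1) := by field_simp
    _ ≤ Real.exp (θ e) * A * (K + 1) := by gcongr
    _ = x e := by rw [h]; field_simp

end SupportMatchings

section ProductMeasure

variable {E : Type*} [Fintype E] [DecidableEq E] {x : E → ℝ}

noncomputable def productMeasure (x : E → ℝ) (S : Finset E) : ℝ :=
  (∏ f ∈ S, x f) * ∏ f ∈ univ \ S, (1 - x f)

lemma productMeasure_nonneg (hx : ∀ e, 0 ≤ x e ∧ x e ≤ 1) (S : Finset E) :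
    0 ≤ productMeasure x S :=
  mul_nonneg (prod_nonneg fun f _ => (hx f).1) (prod_nonneg fun f _ => sub_nonneg.2 (hx f).2)

lemma sum_productMeasure : ∑ S, productMeasure x S = 1 := by
  rw [← powerset_univ]
  simp only [productMeasure]
  rw [← prod_add]
  simp

lemma productMeasure_insert_mul {e : E} {T : Finset E} (he : e ∉ T) :
    productMeasure x (insert e T) * (1 - x e) = x e * productMeasure x T := by
  have hcompl : univ \ T = insert e (univ \ insert e T) := by
    rw [sdiff_insert, insert_erase (mem_sdiff.2 ⟨mem_univ e, he⟩)]
  rw [productMeasure, productMeasure, hcompl, prod_insert he,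
    prod_insert (fun h => (mem_sdiff.1 h).2 (mem_insert_self e T))]
  ring

lemma marginal_productMeasure (e : E) : marginal (productMeasure x) e = x e := by
  set μ := productMeasure x
  have hsplit : ∀ g : Finset E → ℝ,
      ∑ S, g S = ∑ T ∈ (univ.erase e).powerset, (g T + g (insert e T)) := by
    intro g
    rw [sum_add_distrib, ← sum_powerset_insert (notMem_erase e univ), insert_erase (mem_univ e),
      powerset_univ]
  have hnot : ∀ T ∈ (univ.erase e).powerset, e ∉ T := fun T hT he =>
    notMem_erase e univ (mem_powerset.1 hT he)
  calc marginal μ e = ∑ T ∈ (univ.erase e).powerset, μ (insert e T) := by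
        rw [marginal, sum_filter, hsplit]
        exact sum_congr rfl fun T hT => by simp [hnot T hT]
    _ = ∑ T ∈ (univ.erase e).powerset, x e * (μ T + μ (insert e T)) :=
        sum_congr rfl fun T hT => by linarith [productMeasure_insert_mul (x := x) (hnot T hT)]
    _ = x e := by rw [← mul_sum, ← hsplit, sum_productMeasure, mul_one]

lemma productMeasure_insert_div {e : E} {T : Finset E} (he : e ∉ T)
    (hpos : 0 < productMeasure x T + productMeasure x (insert e T)) :
    productMeasure x (insert e T) / (productMeasure x T + productMeasure x (insert e T)) = x e := by
  rw [div_eq_iff hpos.ne']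
  linarith [productMeasure_insert_mul (x := x) he]

end ProductMeasure

theorem stmt_2_general
    {V E : Type*} [Fintype E] [DecidableEq V] [DecidableEq E]
    -- a finite hypergraph of rank at most L, with hyperedge set `E` and vertex map `ends`
    (L : ℕ) (ends : E → Finset V)
    (hrank : ∀ e, (ends e).card ≤ L)
    (x : E → ℝ) (hx : ∀ e, 0 ≤ x e ∧ x e ≤ 1)
    (hdeg : ∀ v : V, ∑ e ∈ univ.filter (fun e => v ∈ ends e), x e ≤ 1) :
    ∃ μ : Finset E → ℝ,
      (∀ S, 0 ≤ μ S) ∧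
      (∑ S : Finset E, μ S) = 1 ∧
      (∀ S, μ S ≠ 0 → IsHypMatching ends S) ∧
      -- (i) selectability with factor 1/(L+1)
      (∀ e, ∑ S ∈ univ.filter (fun S => e ∈ S), μ S = x e / ((L : ℝ) + 1)) ∧
      -- (ii) stationary implementability
      (∀ e : E, ∀ T : Finset E, IsHypMatching ends T → e ∉ T →
        0 < μ T + μ (insert e T) →
        μ (insert e T) / (μ T + μ (insert e T)) ≤ x e) := by
  rcases Nat.eq_zero_or_pos L with rfl | hL
  · have hends : ∀ e, ends e = ∅ := fun e => card_eq_zero.1 (Nat.le_zero.1 (hrank e))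
    refine ⟨productMeasure x, productMeasure_nonneg hx, sum_productMeasure,
      fun S _ e _ f _ _ => by simp [hends],
      fun e => by simpa [marginal] using marginal_productMeasure e,
      fun e T _ he hpos => (productMeasure_insert_div he hpos).le⟩
  have hconf := sum_conflicts_le_rank hL hrank hx hdeg
  set M := supportMatchings ends x
  have hL1 : (0 : ℝ) < L + 1 := by positivity
  obtain ⟨θ, hθ⟩ := exists_marginal_gibbs_eq (M := M) ⟨∅, empty_mem_supportMatchings⟩
    (fun f => div_nonneg (hx f).1 hL1.le)
    (fun S hS f hf => div_pos ((mem_supportMatchings.1 hS).2 f hf) hL1)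
    (fun θ e he => gibbsDual_supportMatchings_le L.cast_nonneg hx hconf θ
      ((div_pos_iff_of_pos_right hL1).1 he))
  refine ⟨gibbs M θ, gibbs_nonneg θ, sum_gibbs ⟨∅, empty_mem_supportMatchings⟩ θ,
    fun S hS => (mem_supportMatchings.1 (mem_of_gibbs_ne_zero hS)).1, hθ,
    fun e T _ he _ => gibbs_insert_div_le isLowerSet_supportMatchings θ he (hx e).1 fun hins => ?_⟩
  exact exp_le_of_marginal_gibbs_eq L.cast_nonneg hconf hθ
    ((mem_supportMatchings.1 hins).2 e (mem_insert_self e T))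

theorem stmt_2
    {V E : Type*} [Fintype V] [Fintype E] [DecidableEq V] [DecidableEq E]
    -- a finite hypergraph of rank at most L, with hyperedge set `E` and vertex map `ends`
    (L : ℕ) (ends : E → Finset V)
    (hrank : ∀ e, (ends e).card ≤ L)
    (x : E → ℝ) (hx : ∀ e, 0 ≤ x e ∧ x e ≤ 1)
    (hdeg : ∀ v : V, ∑ e ∈ univ.filter (fun e => v ∈ ends e), x e ≤ 1) :
    ∃ μ : Finset E → ℝ,
      (∀ S, 0 ≤ μ S) ∧
      (∑ S : Finset E, μ S) = 1 ∧
      (∀ S, μ S ≠ 0 → IsHypMatching ends S) ∧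
      -- (i) selectability with factor 1/(L+1)
      (∀ e, ∑ S ∈ univ.filter (fun S => e ∈ S), μ S = x e / ((L : ℝ) + 1)) ∧
      -- (ii) stationary implementability
      (∀ e : E, ∀ T : Finset E, IsHypMatching ends T → e ∉ T →
        0 < μ T + μ (insert e T) →
        μ (insert e T) / (μ T + μ (insert e T)) ≤ x e) :=
  stmt_2_general L ends hrank x hx hdeg
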